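/- Every H-polytope A in ℝⁿ has only finitely many extreme points, and A is the convex hull of its set of extreme points. In particular, every H-polytope is a V-polytope. -/

import Mathlib

open RealInnerProductSpace

/-- An `H`-polyhedron: a finite intersection of closed half-spaces
`{x | ⟪aᵢ, x⟫ ≤ bᵢ}`. -/
def IsHPolyhedron {n : ℕ} (A : Set (EuclideanSpace ℝ (Fin n))) : Prop :=
  ∃ (p : ℕ) (a : Fin p → EuclideanSpace ℝ (Fin n)) (b : Fin p → ℝ),
    A = ⋂ i, {x : EuclideanSpace ℝ (Fin n) | ⟪a i, x⟫ ≤ b i}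

/-!
An extreme point `x` of a polyhedron `P = ⋂ᵢ {fᵢ ≤ bᵢ}` is determined by its set of active
constraints `{i | fᵢ x = bᵢ}`: if `y ∈ P` satisfies every constraint active at `x` with equality,
then `x + t (x - y)` still lies in `P` for small `t > 0`, and `x` lies strictly between this point
and `y`, forcing `y = x`. With finitely many constraints there are finitely many active sets,
hence finitely many extreme points. A bounded polyhedron in `ℝⁿ` is compact and convex, so by
Krein–Milman it is the closure of the convex hull of its extreme points, and the convex hull of a
finite set is already closed.
-/

open Set Filter Topology

section Polyhedron

variable {E F ι : Type*} [AddCommGroup E] [Module ℝ E] [FunLike F E ℝ] [LinearMapClass F ℝ E ℝ]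
  [Finite ι] (f : ι → F) (b : ι → ℝ)

theorem eq_of_mem_extremePoints_iInter_halfSpace {x y : E}
    (hx : x ∈ (⋂ i, {z | f i z ≤ b i}).extremePoints ℝ) (hy : y ∈ ⋂ i, {z | f i z ≤ b i})
    (hactive : ∀ i, f i x = b i → f i y = b i) : y = x := by
  have hxi : ∀ i, f i x ≤ b i := mem_iInter.1 hx.1
  have hnear : ∀ i, ∀ᶠ t in 𝓝[>] (0 : ℝ), f i x + t * (f i x - f i y) ≤ b i := by
    intro i
    rcases (hxi i).eq_or_lt with heq | hlt
    · exact Eventually.of_forall fun t => by simp [heq, hactive i heq]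
    · have hcont : Continuous fun t : ℝ => f i x + t * (f i x - f i y) := by fun_prop
      have hlim := hcont.tendsto' 0 (f i x) (by simp)
      exact nhdsWithin_le_nhds ((hlim.eventually (gt_mem_nhds hlt)).mono fun _ => le_of_lt)
  obtain ⟨t, ht, htpos : 0 < t⟩ := ((eventually_all.2 hnear).and self_mem_nhdsWithin).exists
  have hz : x + t • (x - y) ∈ ⋂ i, {z | f i z ≤ b i} :=
    mem_iInter.2 fun i => by simpa [mul_sub] using ht i
  have hseg : x ∈ openSegment ℝ y (x + t • (x - y)) := by
    refine ⟨t / (1 + t), 1 / (1 + t), by positivity, by positivity, by field_simp; ring, ?_⟩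
    match_scalars <;> field_simp
    ring
  exact hx.2 hy hz hseg

theorem extremePoints_iInter_halfSpace_finite :
    ((⋂ i, {z | f i z ≤ b i}).extremePoints ℝ).Finite := by
  refine Finite.of_finite_image (f := fun x => {i | f i x = b i}) (toFinite _) ?_
  intro x hx y hy hxy
  refine (eq_of_mem_extremePoints_iInter_halfSpace f b hx hy.1 fun i hi => ?_).symm
  exact (Set.ext_iff.1 hxy i).1 hi

end Polyhedron

theorem IsCompact.convexHull_extremePoints_eq_of_finite {E : Type*} [AddCommGroup E]
    [Module ℝ E] [TopologicalSpace E] [T2Space E] [IsTopologicalAddGroup E] [ContinuousSMul ℝ E]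
    [LocallyConvexSpace ℝ E] {s : Set E} (hcomp : IsCompact s) (hconv : Convex ℝ s)
    (hfin : (s.extremePoints ℝ).Finite) : convexHull ℝ (s.extremePoints ℝ) = s := by
  rw [← (hfin.isClosed_convexHull ℝ).closure_eq, closure_convexHull_extremePoints hcomp hconv]

theorem IsHPolyhedron.eq_iInter_halfSpace {n : ℕ} {A : Set (EuclideanSpace ℝ (Fin n))}
    (hA : IsHPolyhedron A) : ∃ (p : ℕ) (f : Fin p → EuclideanSpace ℝ (Fin n) →L[ℝ] ℝ)
      (b : Fin p → ℝ), A = ⋂ i, {x | f i x ≤ b i} := by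
  obtain ⟨p, a, b, rfl⟩ := hA
  exact ⟨p, fun i => innerSL ℝ (a i), b, by simp only [innerSL_apply_apply]⟩

/-- An `H`-polytope (a bounded `H`-polyhedron) has finitely many extreme points,
is the convex hull of its extreme points, and hence is a `V`-polytope. -/
theorem hPolytope_is_vPolytope (n : ℕ) (A : Set (EuclideanSpace ℝ (Fin n)))
    (hA : IsHPolyhedron A) (hbdd : Bornology.IsBounded A) :
    (Set.extremePoints ℝ A).Finite ∧
    A = convexHull ℝ (Set.extremePoints ℝ A) ∧
    ∃ S : Set (EuclideanSpace ℝ (Fin n)), S.Finite ∧ A = convexHull ℝ S := by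
  obtain ⟨p, f, b, rfl⟩ := hA.eq_iInter_halfSpace
  have hfin := extremePoints_iInter_halfSpace_finite f b
  have hclosed : IsClosed (⋂ i, {x | f i x ≤ b i}) :=
    isClosed_iInter fun i => isClosed_le (f i).continuous continuous_const
  have hconv : Convex ℝ (⋂ i, {x | f i x ≤ b i}) :=
    convex_iInter fun i => convex_halfSpace_le (f i).isLinear (b i)
  have hcomp := Metric.isCompact_of_isClosed_isBounded hclosed hbdd
  have heq := (hcomp.convexHull_extremePoints_eq_of_finite hconv hfin).symm
  exact ⟨hfin, heq, _, hfin, heq⟩
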